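/- Let H=(V,E) be a hypergraph of rank at most 3 in which every vertex has degree at most 2. Say that H contains a rigid triangle if there exist pairwise distinct vertices a,b,c,d such that {a,b,c} ∈ E, {b,c,d} ∈ E, and either {a,d} ∈ E or there exists a vertex f ∉ {a,b,c,d} with {a,d,f} ∈ E; say that H contains a rigid parallel 2-path if there exist pairwise distinct vertices a,b1,b2,c1,c2,d with {a,b1,c1}, {b1,c1,d}, {a,b2,c2}, {b2,c2,d} ∈ E. Then H has a segment representation if and only if H contains neither a rigid triangle nor a rigid parallel 2-path. -/

import Mathlib

set_option maxRecDepth 8000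

abbrev Pt : Type := ℝ × ℝ

def IsLine (L : Set Pt) : Prop :=
  ∃ a b : Pt, a ≠ b ∧ L = (affineSpan ℝ {a, b} : Set Pt)

def IsSegment (S : Set Pt) : Prop :=
  ∃ a b : Pt, a ≠ b ∧ S = segment ℝ a b

structure SimpleHypergraph (ι : Type) where
  V : Finset ι
  E : Finset (Finset ι)
  edge_nonempty : ∀ e ∈ E, e.Nonempty
  edge_subset : ∀ e ∈ E, e ⊆ V

structure LineRep {ι : Type} (H : SimpleHypergraph ι) where
  α : ι → Pt
  β : Finset ι → Set Pt
  α_inj : Set.InjOn α ↑H.V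
  β_inj : Set.InjOn β ↑H.E
  β_isLine : ∀ e ∈ H.E, IsLine (β e)
  incidence : ∀ v ∈ H.V, ∀ e ∈ H.E, (v ∈ e ↔ α v ∈ β e)

structure SegmentRep {ι : Type} (H : SimpleHypergraph ι) where
  α : ι → Pt
  β : Finset ι → Set Pt
  α_inj : Set.InjOn α ↑H.V
  β_inj : Set.InjOn β ↑H.E
  β_isSegment : ∀ e ∈ H.E, IsSegment (β e)
  incidence : ∀ v ∈ H.V, ∀ e ∈ H.E, (v ∈ e ↔ α v ∈ β e)

def SegmentRep.Strict {ι : Type} {H : SimpleHypergraph ι} (R : SegmentRep H) : Prop :=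
  ∀ e ∈ H.E, ∀ e' ∈ H.E, e ≠ e' → (R.β e ∩ R.β e').Subsingleton

def LineRep.CrossingFree {ι : Type} {H : SimpleHypergraph ι} (R : LineRep H) : Prop :=
  ∀ e ∈ H.E, ∀ e' ∈ H.E, ((R.β e ∩ R.β e').Nonempty ↔ ∃ v, v ∈ e ∧ v ∈ e')

def SegmentRep.CrossingFree {ι : Type} {H : SimpleHypergraph ι} (R : SegmentRep H) : Prop :=
  ∀ e ∈ H.E, ∀ e' ∈ H.E, ((R.β e ∩ R.β e').Nonempty ↔ ∃ v, v ∈ e ∧ v ∈ e')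

/-!
In a segment representation, two edges sharing vertices `b ≠ c` have their segments on the line
`bc`; as neither contains the private vertex `a`, resp. `d`, of the other, `b` lies between `a` and
`d`. A third edge through `a` and `d` would then contain `b`, which rules out rigid triangles; in a
rigid parallel 2-path, `b₂` lies between `a` and `d`, hence on the segment of `{a, b₁, c₁}` or of
`{b₁, c₁, d}`.

Conversely, call two edges twins if they share two vertices; with rank `≤ 3` and degree `≤ 2` an
edge has at most one twin. Each class (an edge and its twin) gets its own tangent `y = 2tx - t²` of
the parabola `y = x²`. A vertex on edges of two classes goes to the meeting point
`((s + u) / 2, s u)` of their tangents, a vertex on one class to its tangent at an unused parameter,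
an isolated vertex above the parabola; since two tangents meet only once, a vertex lies on the
tangent of a class only if it lies on an edge of that class. Each edge is the hull of its vertices
on its tangent. Only twins `S ∪ {a}`, `S ∪ {d}` need care: `S` must be placed strictly between `a`
and `d`, which works because `a` and `d` are at different points; coincident `a` and `d` would
give a rigid triangle or a rigid parallel 2-path.
-/

theorem Finset.eq_insert_of_subset_of_card_le {α : Type*} [DecidableEq α] {s t : Finset α} {a : α}
    (hts : t ⊆ s) (hcard : s.card ≤ t.card + 1) (ha : a ∈ s) (hat : a ∉ t) : s = insert a t :=
  (Finset.eq_of_subset_of_card_le (Finset.insert_subset ha hts)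
    (by rw [Finset.card_insert_of_notMem hat]; exact hcard)).symm

theorem Finset.eq_pair_sum_sub {s : Finset ℝ} (hs : s.card = 2) {t : ℝ} (ht : t ∈ s) :
    s = {t, s.sum id - t} := by
  obtain ⟨a, b, hab, rfl⟩ := Finset.card_eq_two.1 hs
  rw [Finset.sum_pair hab]
  rcases Finset.mem_insert.1 ht with rfl | ht
  · simp
  · rw [Finset.mem_singleton.1 ht, Finset.pair_comm]; simp

theorem Finset.sum_sub_mem_of_card_eq_two {s : Finset ℝ} (hs : s.card = 2) {t : ℝ} (ht : t ∈ s) :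
    s.sum id - t ∈ s := by
  have h := Finset.eq_pair_sum_sub hs ht
  generalize s.sum id - t = x at h ⊢
  simp [h]

section BetweenRange

noncomputable def betweenRange (s : Finset ℝ) : Set ℝ :=
  if sInf (s : Set ℝ) < sSup (s : Set ℝ) then Set.Ioo (sInf (s : Set ℝ)) (sSup (s : Set ℝ))
  else Set.Ioi (sSup (s : Set ℝ))

theorem betweenRange_infinite (s : Finset ℝ) : (betweenRange s).Infinite := by
  unfold betweenRange
  split_ifs with h
  · exact Set.Ioo_infinite h
  · exact Set.Ioi_infinite _

theorem forall_lt_or_forall_gt_of_card_le_two {s : Finset ℝ} (hs : s.card ≤ 2) {p : ℝ}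
    (hp : p ∈ s) :
    (∀ x ∈ betweenRange s ∪ ↑(s.erase p), p < x) ∨
      (∀ x ∈ betweenRange s ∪ ↑(s.erase p), x < p) := by
  rcases (s.erase p).eq_empty_or_nonempty with h | ⟨q, hq⟩
  · obtain rfl : s = {p} := (Finset.erase_eq_empty_iff s p).1 h |>.resolve_left
      (Finset.ne_empty_of_mem hp)
    left
    simp [betweenRange]
  · have hqp : q ≠ p := Finset.ne_of_mem_erase hq
    have hs' : s.erase p = {q} := Finset.eq_singleton_iff_unique_mem.2 ⟨hq, fun x hx =>
      Finset.card_le_one.1 (by rw [Finset.card_erase_of_mem hp]; omega) x hx q hq⟩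
    rw [hs', show s = {p, q} by rw [← Finset.insert_erase hp, hs']]
    simp only [betweenRange, Finset.coe_pair, csInf_pair, csSup_pair, Finset.coe_singleton]
    rcases lt_or_gt_of_ne hqp with h | h
    · right
      simp [h, h.le]
    · left
      simpa [h, h.le] using fun x hx _ => hx

theorem notMem_betweenRange_of_card_le_two {s : Finset ℝ} (hs : s.card ≤ 2) {p : ℝ}
    (hp : p ∈ s) : p ∉ betweenRange s := fun h =>
  (forall_lt_or_forall_gt_of_card_le_two hs hp).elim (fun h' => lt_irrefl p (h' p (Or.inl h)))
    (fun h' => lt_irrefl p (h' p (Or.inl h)))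

end BetweenRange

section Segment

variable {E : Type*} [AddCommGroup E] [Module ℝ E]

open AffineMap in
theorem segment_subset_union_of_mem_segment {a b d : E} (hb : b ∈ segment ℝ a d) :
    segment ℝ a d ⊆ segment ℝ a b ∪ segment ℝ b d := by
  rw [segment_eq_image_lineMap] at hb ⊢
  obtain ⟨r, hr, rfl⟩ := hb
  have hab : segment ℝ a (lineMap a d r) = lineMap a d '' segment ℝ 0 r := by
    rw [image_segment, lineMap_apply_zero]
  have hbd : segment ℝ (lineMap a d r) d = lineMap a d '' segment ℝ r 1 := by
    rw [image_segment, lineMap_apply_one]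
  rw [hab, hbd, segment_eq_Icc hr.1, segment_eq_Icc hr.2, ← Set.image_union,
    Set.Icc_union_Icc_eq_Icc hr.1 hr.2]

theorem mem_line_of_mem_segment {p q a b c : E} (ha : a ∈ segment ℝ p q)
    (hb : b ∈ segment ℝ p q) (hc : c ∈ segment ℝ p q) (hbc : b ≠ c) : a ∈ line[ℝ, b, c] :=
  (collinear_insert_insert_insert_of_mem_affineSpan_pair (mem_segment_iff_wbtw.1 ha).mem_affineSpan
      (mem_segment_iff_wbtw.1 hb).mem_affineSpan (mem_segment_iff_wbtw.1 hc).mem_affineSpan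
    ).mem_affineSpan_of_mem_of_ne (by simp) (by simp) (by simp) hbc

theorem mem_segment_of_mem_segments {p₁ q₁ p₂ q₂ a b c d : E} (hbc : b ≠ c)
    (ha₁ : a ∈ segment ℝ p₁ q₁) (hb₁ : b ∈ segment ℝ p₁ q₁) (hc₁ : c ∈ segment ℝ p₁ q₁)
    (hb₂ : b ∈ segment ℝ p₂ q₂) (hc₂ : c ∈ segment ℝ p₂ q₂) (hd₂ : d ∈ segment ℝ p₂ q₂)
    (ha₂ : a ∉ segment ℝ p₂ q₂) (hd₁ : d ∉ segment ℝ p₁ q₁) :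
    b ∈ segment ℝ a d ∧ segment ℝ a d ⊆ segment ℝ p₁ q₁ ∪ segment ℝ p₂ q₂ := by
  have hcol : Collinear ℝ ({a, b, d} : Set E) := by
    have h := collinear_insert_insert_of_mem_affineSpan_pair
      (mem_line_of_mem_segment ha₁ hb₁ hc₁ hbc) (mem_line_of_mem_segment hd₂ hb₂ hc₂ hbc)
    exact h.subset (by intro x; simp; tauto)
  have hb : b ∈ segment ℝ a d := by
    rcases hcol.wbtw_or_wbtw_or_wbtw with h | h | h
    · exact h.mem_segment
    · exact absurd ((convex_segment p₁ q₁).segment_subset hb₁ ha₁ h.mem_segment) hd₁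
    · exact absurd ((convex_segment p₂ q₂).segment_subset hd₂ hb₂ h.mem_segment) ha₂
  refine ⟨hb, (segment_subset_union_of_mem_segment hb).trans (Set.union_subset_union ?_ ?_)⟩
  · exact (convex_segment p₁ q₁).segment_subset ha₁ hb₁
  · exact (convex_segment p₂ q₂).segment_subset hb₂ hd₂

end Segment

section Parabola

def OnTangent (t : ℝ) (p : Pt) : Prop := p.2 = 2 * t * p.1 - t ^ 2

def tangentPoint (t x : ℝ) : Pt := (x, 2 * t * x - t ^ 2)

noncomputable def tangentMeet (s u : ℝ) : Pt := ((s + u) / 2, s * u)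

theorem onTangent_tangentMeet_iff {r s u : ℝ} :
    OnTangent r (tangentMeet s u) ↔ r = s ∨ r = u := by
  rw [← sub_eq_zero (a := r), ← sub_eq_zero (a := r) (b := u), ← mul_eq_zero, OnTangent,
    tangentMeet]
  constructor <;> intro h <;> linear_combination h

theorem onTangent_tangentMeet (s u : ℝ) : OnTangent s (tangentMeet s u) :=
  onTangent_tangentMeet_iff.2 (Or.inl rfl)

theorem OnTangent.le_sq {t : ℝ} {p : Pt} (h : OnTangent t p) : p.2 ≤ p.1 ^ 2 := by
  rw [h]; nlinarith [sq_nonneg (p.1 - t)]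

theorem tangentPoint_eq_lineMap (t x : ℝ) :
    tangentPoint t x = AffineMap.lineMap (tangentPoint t 0) (tangentPoint t 1) x := by
  simp only [tangentPoint, AffineMap.lineMap_apply_module, Prod.smul_mk, Prod.mk_add_mk,
    smul_eq_mul, Prod.mk.injEq]
  constructor <;> ring

theorem mem_segment_tangentPoint_iff {t lo hi : ℝ} (h : lo ≤ hi) {p : Pt} :
    p ∈ segment ℝ (tangentPoint t lo) (tangentPoint t hi) ↔
      OnTangent t p ∧ lo ≤ p.1 ∧ p.1 ≤ hi := by
  rw [tangentPoint_eq_lineMap t lo, tangentPoint_eq_lineMap t hi, ← image_segment,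
    segment_eq_Icc h]
  constructor
  · rintro ⟨x, hx, rfl⟩
    rw [← tangentPoint_eq_lineMap]
    exact ⟨rfl, hx⟩
  · rintro ⟨hp, hx⟩
    refine ⟨p.1, hx, ?_⟩
    rw [← tangentPoint_eq_lineMap, tangentPoint, ← hp]

end Parabola

namespace SimpleHypergraph

theorem injOn_of_incidence {ι : Type} {H : SimpleHypergraph ι} {α : ι → Pt}
    {β : Finset ι → Set Pt} (h : ∀ v ∈ H.V, ∀ e ∈ H.E, v ∈ e ↔ α v ∈ β e) : Set.InjOn β H.E := by
  intro e he f hf hef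
  ext v
  constructor
  · intro hv
    have hV := H.edge_subset e he hv
    exact (h v hV f hf).2 (hef ▸ (h v hV e he).1 hv)
  · intro hv
    have hV := H.edge_subset f hf hv
    exact (h v hV e he).2 (hef ▸ (h v hV f hf).1 hv)

variable {ι : Type} [DecidableEq ι] (H : SimpleHypergraph ι)

def HasRigidTriangle : Prop :=
  ∃ a b c d : ι, [a, b, c, d].Pairwise (· ≠ ·) ∧
    ({a, b, c} : Finset ι) ∈ H.E ∧ ({b, c, d} : Finset ι) ∈ H.E ∧
    (({a, d} : Finset ι) ∈ H.E ∨
      ∃ f : ι, f ∉ ({a, b, c, d} : Finset ι) ∧ ({a, d, f} : Finset ι) ∈ H.E)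

def HasRigidParallelPath : Prop :=
  ∃ a b₁ b₂ c₁ c₂ d : ι, [a, b₁, b₂, c₁, c₂, d].Pairwise (· ≠ ·) ∧
    ({a, b₁, c₁} : Finset ι) ∈ H.E ∧ ({b₁, c₁, d} : Finset ι) ∈ H.E ∧
    ({a, b₂, c₂} : Finset ι) ∈ H.E ∧ ({b₂, c₂, d} : Finset ι) ∈ H.E

end SimpleHypergraph

namespace SegmentRep

variable {ι : Type} {H : SimpleHypergraph ι}

theorem α_mem_β (R : SegmentRep H) {v : ι} {e : Finset ι} (he : e ∈ H.E) (hv : v ∈ e) :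
    R.α v ∈ R.β e :=
  (R.incidence v (H.edge_subset e he hv) e he).1 hv

theorem α_notMem_β (R : SegmentRep H) {v : ι} {e : Finset ι} (hv : v ∈ H.V) (he : e ∈ H.E)
    (hve : v ∉ e) : R.α v ∉ R.β e :=
  mt (R.incidence v hv e he).2 hve

theorem mem_segment_of_overlap (R : SegmentRep H) {a b c d : ι} {e₁ e₂ : Finset ι}
    (he₁ : e₁ ∈ H.E) (he₂ : e₂ ∈ H.E) (hbc : b ≠ c) (ha₁ : a ∈ e₁) (hb₁ : b ∈ e₁) (hc₁ : c ∈ e₁)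
    (hb₂ : b ∈ e₂) (hc₂ : c ∈ e₂) (hd₂ : d ∈ e₂) (ha₂ : a ∉ e₂) (hd₁ : d ∉ e₁) :
    R.α b ∈ segment ℝ (R.α a) (R.α d) ∧ segment ℝ (R.α a) (R.α d) ⊆ R.β e₁ ∪ R.β e₂ := by
  have hV := H.edge_subset
  obtain ⟨p₁, q₁, -, hpq₁⟩ := R.β_isSegment e₁ he₁
  obtain ⟨p₂, q₂, -, hpq₂⟩ := R.β_isSegment e₂ he₂
  have hα : R.α b ≠ R.α c := fun h => hbc (R.α_inj (hV _ he₁ hb₁) (hV _ he₁ hc₁) h)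
  have key := mem_segment_of_mem_segments hα
    (hpq₁ ▸ R.α_mem_β he₁ ha₁) (hpq₁ ▸ R.α_mem_β he₁ hb₁) (hpq₁ ▸ R.α_mem_β he₁ hc₁)
    (hpq₂ ▸ R.α_mem_β he₂ hb₂) (hpq₂ ▸ R.α_mem_β he₂ hc₂) (hpq₂ ▸ R.α_mem_β he₂ hd₂)
    (hpq₂ ▸ R.α_notMem_β (hV _ he₁ ha₁) he₂ ha₂) (hpq₁ ▸ R.α_notMem_β (hV _ he₂ hd₂) he₁ hd₁)
  rwa [hpq₁, hpq₂]

theorem convex_β (R : SegmentRep H) {e : Finset ι} (he : e ∈ H.E) : Convex ℝ (R.β e) := by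
  obtain ⟨p, q, -, hpq⟩ := R.β_isSegment e he
  exact hpq ▸ convex_segment p q

variable [DecidableEq ι]

theorem not_hasRigidTriangle (R : SegmentRep H) : ¬ H.HasRigidTriangle := by
  rintro ⟨a, b, c, d, hdist, h₁, h₂, h₃⟩
  simp only [List.pairwise_cons, List.mem_cons, List.not_mem_nil, or_false, forall_eq_or_imp,
    forall_eq, List.Pairwise.nil, IsEmpty.forall_iff, implies_true, and_true] at hdist
  obtain ⟨⟨hab, hac, had⟩, ⟨hbc, hbd⟩, hcd⟩ := hdist
  obtain ⟨e, he, hae, hde, hbe⟩ : ∃ e ∈ H.E, a ∈ e ∧ d ∈ e ∧ b ∉ e := by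
    rcases h₃ with h | ⟨f, hf, h⟩
    · exact ⟨_, h, by simp, by simp, by simp [hab.symm, hbd]⟩
    · simp only [Finset.mem_insert, Finset.mem_singleton, not_or] at hf
      exact ⟨_, h, by simp, by simp, by simp [hab.symm, hbd, Ne.symm hf.2.1]⟩
  have hb := (R.mem_segment_of_overlap (a := a) (d := d) h₁ h₂ hbc (by simp) (by simp) (by simp)
    (by simp) (by simp) (by simp) (by simp [hab, hac, had])
    (by simp [had.symm, hbd.symm, hcd.symm])).1
  exact R.α_notMem_β (H.edge_subset _ h₁ (by simp)) he hbe
    ((R.convex_β he).segment_subset (R.α_mem_β he hae) (R.α_mem_β he hde) hb)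

theorem not_hasRigidParallelPath (R : SegmentRep H) : ¬ H.HasRigidParallelPath := by
  rintro ⟨a, b₁, b₂, c₁, c₂, d, hdist, h₁, h₂, h₃, h₄⟩
  simp only [List.pairwise_cons, List.mem_cons, List.not_mem_nil, or_false, forall_eq_or_imp,
    forall_eq, List.Pairwise.nil, IsEmpty.forall_iff, implies_true, and_true] at hdist
  obtain ⟨⟨hab₁, hab₂, hac₁, hac₂, had⟩, ⟨hb₁b₂, hb₁c₁, hb₁c₂, hb₁d⟩, ⟨hb₂c₁, hb₂c₂, hb₂d⟩,
    ⟨hc₁c₂, hc₁d⟩, hc₂d⟩ := hdist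
  have h₁₂ := R.mem_segment_of_overlap (a := a) (d := d) h₁ h₂ hb₁c₁ (by simp) (by simp)
    (by simp) (by simp) (by simp) (by simp) (by simp [hab₁, hac₁, had])
    (by simp [had.symm, hb₁d.symm, hc₁d.symm])
  have h₃₄ := R.mem_segment_of_overlap (a := a) (d := d) h₃ h₄ hb₂c₂ (by simp) (by simp)
    (by simp) (by simp) (by simp) (by simp) (by simp [hab₂, hac₂, had])
    (by simp [had.symm, hb₂d.symm, hc₂d.symm])
  have hb₂V := H.edge_subset _ h₃ (by simp : b₂ ∈ ({a, b₂, c₂} : Finset ι))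
  rcases h₁₂.2 h₃₄.1 with h | h
  · exact R.α_notMem_β hb₂V h₁ (by simp [hab₂.symm, hb₁b₂.symm, hb₂c₁]) h
  · exact R.α_notMem_β hb₂V h₂ (by simp [hb₁b₂.symm, hb₂c₁, hb₂d]) h

end SegmentRep

namespace SimpleHypergraph

variable {ι : Type} [DecidableEq ι] (H : SimpleHypergraph ι)

/-! ### Twin edges -/

def incidentEdges (v : ι) : Finset (Finset ι) := H.E.filter (fun e => v ∈ e)

def Twins (e f : Finset ι) : Prop := e ∈ H.E ∧ f ∈ H.E ∧ e ≠ f ∧ 2 ≤ (e ∩ f).card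

def edgeClass (e : Finset ι) : Finset (Finset ι) := H.E.filter (fun f => e = f ∨ 2 ≤ (e ∩ f).card)

-- The tangent carrying `e` is the tangent at `classParam e`.
noncomputable def classParam (e : Finset ι) : ℝ :=
  ((H.E.image H.edgeClass).toList.idxOf (H.edgeClass e) : ℕ)

variable {H}

@[simp]
theorem mem_incidentEdges {v : ι} {e : Finset ι} : e ∈ H.incidentEdges v ↔ e ∈ H.E ∧ v ∈ e :=
  Finset.mem_filter

theorem Twins.symm {e f : Finset ι} (h : H.Twins e f) : H.Twins f e :=
  ⟨h.2.1, h.1, h.2.2.1.symm, Finset.inter_comm e f ▸ h.2.2.2⟩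

theorem Twins.card_inter (hrank : ∀ e ∈ H.E, e.card ≤ 3) {e f : Finset ι} (h : H.Twins e f) :
    (e ∩ f).card = 2 := by
  obtain ⟨he, hf, hef, h2⟩ := h
  refine le_antisymm ?_ h2
  by_contra! h3
  have hsub_e := Finset.eq_of_subset_of_card_le Finset.inter_subset_left (by linarith [hrank e he])
  have hsub_f := Finset.eq_of_subset_of_card_le Finset.inter_subset_right (by linarith [hrank f hf])
  exact hef (hsub_e.symm.trans hsub_f)

theorem incidentEdges_eq_pair (hdeg : ∀ v ∈ H.V, (H.incidentEdges v).card ≤ 2) {v : ι}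
    {e f : Finset ι} (he : e ∈ H.E) (hf : f ∈ H.E) (hef : e ≠ f) (hve : v ∈ e) (hvf : v ∈ f) :
    H.incidentEdges v = {e, f} := by
  refine (Finset.eq_of_subset_of_card_le ?_ ?_).symm
  · simp [Finset.insert_subset_iff, he, hf, hve, hvf]
  · rw [Finset.card_pair hef]; exact hdeg v (H.edge_subset e he hve)

theorem eq_or_eq_of_mem_of_mem (hdeg : ∀ v ∈ H.V, (H.incidentEdges v).card ≤ 2) {v : ι}
    {e f g : Finset ι} (he : e ∈ H.E) (hf : f ∈ H.E) (hg : g ∈ H.E) (hef : e ≠ f) (hve : v ∈ e)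
    (hvf : v ∈ f) (hvg : v ∈ g) : g = e ∨ g = f := by
  have : g ∈ H.incidentEdges v := mem_incidentEdges.2 ⟨hg, hvg⟩
  simpa [incidentEdges_eq_pair hdeg he hf hef hve hvf] using this

theorem Twins.unique (hrank : ∀ e ∈ H.E, e.card ≤ 3)
    (hdeg : ∀ v ∈ H.V, (H.incidentEdges v).card ≤ 2) {e f g : Finset ι} (hf : H.Twins e f)
    (hg : H.Twins e g) : f = g := by
  have hunion : (e ∩ f ∪ e ∩ g).card ≤ 3 :=
    (Finset.card_le_card (Finset.union_subset Finset.inter_subset_left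
      Finset.inter_subset_left)).trans (hrank e hf.1)
  have hinter := Finset.card_union_add_card_inter (e ∩ f) (e ∩ g)
  obtain ⟨v, hv⟩ : (e ∩ f ∩ (e ∩ g)).Nonempty := by
    rw [← Finset.card_pos]; rw [hf.card_inter hrank, hg.card_inter hrank] at hinter; omega
  simp only [Finset.mem_inter] at hv
  rcases eq_or_eq_of_mem_of_mem hdeg hf.1 hf.2.1 hg.2.1 hf.2.2.1 hv.1.1 hv.1.2 hv.2.2 with h | h
  · exact absurd h.symm hg.2.2.1
  · exact h.symm

theorem Twins.edgeClass_eq (hrank : ∀ e ∈ H.E, e.card ≤ 3)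
    (hdeg : ∀ v ∈ H.V, (H.incidentEdges v).card ≤ 2) {e f : Finset ι} (h : H.Twins e f) :
    H.edgeClass e = {e, f} := by
  ext g
  simp only [edgeClass, Finset.mem_filter, Finset.mem_insert, Finset.mem_singleton]
  constructor
  · rintro ⟨hg, rfl | h2⟩
    · exact Or.inl rfl
    · by_cases hge : g = e
      · exact Or.inl hge
      · exact Or.inr (h.unique hrank hdeg ⟨h.1, hg, Ne.symm hge, h2⟩).symm
  · rintro (rfl | rfl)
    · exact ⟨h.1, Or.inl rfl⟩
    · exact ⟨h.2.1, Or.inr h.2.2.2⟩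

theorem edgeClass_eq_iff (hrank : ∀ e ∈ H.E, e.card ≤ 3)
    (hdeg : ∀ v ∈ H.V, (H.incidentEdges v).card ≤ 2) {e f : Finset ι} (he : e ∈ H.E)
    (hf : f ∈ H.E) : H.edgeClass e = H.edgeClass f ↔ e = f ∨ H.Twins e f := by
  constructor
  · intro h
    have : f ∈ H.edgeClass e := h ▸ Finset.mem_filter.2 ⟨hf, Or.inl rfl⟩
    obtain ⟨-, rfl | h2⟩ := Finset.mem_filter.1 this
    · exact Or.inl rfl
    · by_cases hef : e = f
      · exact Or.inl hef
      · exact Or.inr ⟨he, hf, hef, h2⟩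
  · rintro (rfl | h)
    · rfl
    · rw [h.edgeClass_eq hrank hdeg, h.symm.edgeClass_eq hrank hdeg, Finset.pair_comm]

theorem classParam_eq_iff (hrank : ∀ e ∈ H.E, e.card ≤ 3)
    (hdeg : ∀ v ∈ H.V, (H.incidentEdges v).card ≤ 2) {e f : Finset ι} (he : e ∈ H.E)
    (hf : f ∈ H.E) : H.classParam e = H.classParam f ↔ e = f ∨ H.Twins e f := by
  rw [← edgeClass_eq_iff hrank hdeg he hf, classParam, classParam, Nat.cast_inj]
  exact List.idxOf_inj (Finset.mem_toList.2 (Finset.mem_image_of_mem _ he))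

theorem classParam_nonneg (e : Finset ι) : 0 ≤ H.classParam e := Nat.cast_nonneg _

theorem Twins.classParam_eq (hrank : ∀ e ∈ H.E, e.card ≤ 3)
    (hdeg : ∀ v ∈ H.V, (H.incidentEdges v).card ≤ 2) {e f : Finset ι} (h : H.Twins e f) :
    H.classParam e = H.classParam f :=
  (classParam_eq_iff hrank hdeg h.1 h.2.1).2 (Or.inr h)

theorem Twins.notMem_of_classParam_ne (hrank : ∀ e ∈ H.E, e.card ≤ 3)
    (hdeg : ∀ v ∈ H.V, (H.incidentEdges v).card ≤ 2) {e f g : Finset ι} {v : ι}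
    (h : H.Twins e f) (hve : v ∈ e) (hg : g ∈ H.E) (hvg : v ∈ g)
    (hne : H.classParam g ≠ H.classParam e) : v ∉ f := fun hvf =>
  (eq_or_eq_of_mem_of_mem hdeg h.1 h.2.1 hg h.2.2.1 hve hvf hvg).elim (fun h' => hne (h' ▸ rfl))
    (fun h' => hne (h' ▸ (h.classParam_eq hrank hdeg).symm))

theorem Twins.exists_eq_triple (hrank : ∀ e ∈ H.E, e.card ≤ 3) {e f : Finset ι} {v w : ι}
    (h : H.Twins e f) (hve : v ∈ e) (hvf : v ∉ f) (hwf : w ∈ f) (hwe : w ∉ e) :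
    ∃ b c, b ≠ c ∧ e ∩ f = {b, c} ∧ e = {v, b, c} ∧ f = {b, c, w} := by
  obtain ⟨b, c, hbc, hS⟩ := Finset.card_eq_two.1 (h.card_inter hrank)
  refine ⟨b, c, hbc, hS, ?_, ?_⟩
  · rw [← hS]
    exact Finset.eq_insert_of_subset_of_card_le Finset.inter_subset_left
      (by rw [h.card_inter hrank]; exact hrank e h.1) hve (by simp [hvf])
  · have := Finset.eq_insert_of_subset_of_card_le (Finset.inter_subset_right (s₁ := e))
      (by rw [h.card_inter hrank]; exact hrank f h.2.1) hwf (by simp [hwe])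
    rw [this, hS]
    ext x; simp only [Finset.mem_insert, Finset.mem_singleton]; tauto

theorem Twins.hasRigidTriangle (hrank : ∀ e ∈ H.E, e.card ≤ 3)
    (hdeg : ∀ v ∈ H.V, (H.incidentEdges v).card ≤ 2) {e f g : Finset ι} {v w : ι}
    (h : H.Twins e f) (hve : v ∈ e) (hvf : v ∉ f) (hwf : w ∈ f) (hwe : w ∉ e) (hg : g ∈ H.E)
    (hvg : v ∈ g) (hwg : w ∈ g) (hge : g ≠ e) (hgf : g ≠ f) : H.HasRigidTriangle := by
  obtain ⟨b, c, hbc, hS, rfl, rfl⟩ := h.exists_eq_triple hrank hve hvf hwf hwe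
  have hshared : ∀ x ∈ ({b, c} : Finset ι), x ∉ g := fun x hx hxg => by
    rw [← hS, Finset.mem_inter] at hx
    exact (eq_or_eq_of_mem_of_mem hdeg h.1 h.2.1 hg h.2.2.1 hx.1 hx.2 hxg).elim hge hgf
  simp only [Finset.mem_insert, Finset.mem_singleton, not_or, forall_eq_or_imp, forall_eq]
    at hshared hvf hwe
  have hvw : v ≠ w := by rintro rfl; exact hvf.2.2 rfl
  refine ⟨v, b, c, w, by simp_all [Ne.symm], h.1, h.2.1, ?_⟩
  rcases (g \ {v, w}).eq_empty_or_nonempty with h0 | ⟨x, hx⟩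
  · left
    convert hg using 1
    exact Finset.Subset.antisymm (by simp [Finset.insert_subset_iff, hvg, hwg])
      (Finset.sdiff_eq_empty_iff_subset.1 h0)
  · right
    simp only [Finset.mem_sdiff, Finset.mem_insert, Finset.mem_singleton, not_or] at hx
    refine ⟨x, ?_, ?_⟩
    · simp only [Finset.mem_insert, Finset.mem_singleton, not_or]
      exact ⟨hx.2.1, fun h => hshared.1 (h ▸ hx.1), fun h => hshared.2 (h ▸ hx.1), hx.2.2⟩
    · convert hg using 1
      rw [Finset.eq_insert_of_subset_of_card_le (t := {v, w}) (a := x)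
        (by simp [Finset.insert_subset_iff, hvg, hwg])
        (by rw [Finset.card_pair hvw]; exact hrank g hg) hx.1 (by simp [hx.2.1, hx.2.2])]
      ext y; simp only [Finset.mem_insert, Finset.mem_singleton]; tauto

theorem Twins.hasRigidParallelPath (hrank : ∀ e ∈ H.E, e.card ≤ 3)
    (hdeg : ∀ v ∈ H.V, (H.incidentEdges v).card ≤ 2) {e₁ f₁ e₂ f₂ : Finset ι} {v w : ι}
    (h₁ : H.Twins e₁ f₁) (h₂ : H.Twins e₂ f₂) (h₁₂ : e₁ ≠ e₂) (hve₁ : v ∈ e₁) (hvf₁ : v ∉ f₁)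
    (hve₂ : v ∈ e₂) (hvf₂ : v ∉ f₂) (hwf₁ : w ∈ f₁) (hwe₁ : w ∉ e₁) (hwf₂ : w ∈ f₂)
    (hwe₂ : w ∉ e₂) : H.HasRigidParallelPath := by
  have hdisj : ∀ x ∈ e₁ ∩ f₁, x ∉ e₂ ∩ f₂ := fun x hx₁ hx₂ => by
    rw [Finset.mem_inter] at hx₁ hx₂
    rcases eq_or_eq_of_mem_of_mem hdeg h₁.1 h₁.2.1 h₂.1 h₁.2.2.1 hx₁.1 hx₁.2 hx₂.1 with h | h
    · exact h₁₂ h.symm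
    · exact hvf₁ (h ▸ hve₂)
  obtain ⟨b₁, c₁, hbc₁, hS₁, rfl, rfl⟩ := h₁.exists_eq_triple hrank hve₁ hvf₁ hwf₁ hwe₁
  obtain ⟨b₂, c₂, hbc₂, hS₂, rfl, rfl⟩ := h₂.exists_eq_triple hrank hve₂ hvf₂ hwf₂ hwe₂
  rw [hS₁, hS₂] at hdisj
  simp only [Finset.mem_insert, Finset.mem_singleton, not_or, forall_eq_or_imp, forall_eq]
    at hdisj hvf₁ hvf₂ hwe₁ hwe₂
  refine ⟨v, b₁, b₂, c₁, c₂, w, by simp_all [Ne.symm], h₁.1, h₁.2.1, h₂.1, h₂.2.1⟩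

theorem hasRigid_of_classParam_eq (hrank : ∀ e ∈ H.E, e.card ≤ 3)
    (hdeg : ∀ v ∈ H.V, (H.incidentEdges v).card ≤ 2) {v w : ι} (hvw : v ≠ w)
    {e₁ e₂ f₁ f₂ : Finset ι} (he₁ : e₁ ∈ H.E) (he₂ : e₂ ∈ H.E) (hf₁ : f₁ ∈ H.E)
    (hf₂ : f₂ ∈ H.E) (hve₁ : v ∈ e₁) (hve₂ : v ∈ e₂) (hwf₁ : w ∈ f₁) (hwf₂ : w ∈ f₂)
    (h₁ : H.classParam e₁ = H.classParam f₁) (h₂ : H.classParam e₂ = H.classParam f₂)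
    (h₁₂ : H.classParam e₁ ≠ H.classParam e₂) : H.HasRigidTriangle ∨ H.HasRigidParallelPath := by
  have ne_of_param_ne {x y : Finset ι} (h : H.classParam x ≠ H.classParam y) : x ≠ y :=
    fun hxy => h (hxy ▸ rfl)
  rw [classParam_eq_iff hrank hdeg he₁ hf₁] at h₁
  rw [classParam_eq_iff hrank hdeg he₂ hf₂] at h₂
  rcases h₁ with rfl | t₁ <;> rcases h₂ with rfl | t₂
  · refine absurd ((classParam_eq_iff hrank hdeg he₁ he₂).2 (Or.inr ⟨he₁, he₂,
      ne_of_param_ne h₁₂, ?_⟩)) h₁₂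
    rw [← Finset.card_pair hvw]
    exact Finset.card_le_card (by simp [Finset.insert_subset_iff, *])
  · have h₁₂' : H.classParam e₁ ≠ H.classParam f₂ := t₂.classParam_eq hrank hdeg ▸ h₁₂
    exact Or.inl (t₂.hasRigidTriangle hrank hdeg hve₂
      (t₂.notMem_of_classParam_ne hrank hdeg hve₂ he₁ hve₁ h₁₂) hwf₂
      (t₂.symm.notMem_of_classParam_ne hrank hdeg hwf₂ he₁ hwf₁ h₁₂') he₁ hve₁ hwf₁
      (ne_of_param_ne h₁₂) (ne_of_param_ne h₁₂'))
  · have h₂₁ : H.classParam e₂ ≠ H.classParam e₁ := Ne.symm h₁₂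
    have h₂₁' : H.classParam e₂ ≠ H.classParam f₁ := t₁.classParam_eq hrank hdeg ▸ h₂₁
    exact Or.inl (t₁.hasRigidTriangle hrank hdeg hve₁
      (t₁.notMem_of_classParam_ne hrank hdeg hve₁ he₂ hve₂ h₂₁) hwf₁
      (t₁.symm.notMem_of_classParam_ne hrank hdeg hwf₁ he₂ hwf₂ h₂₁') he₂ hve₂ hwf₂
      (ne_of_param_ne h₂₁) (ne_of_param_ne h₂₁'))
  · have hf₁₂ : H.classParam f₁ ≠ H.classParam f₂ := by
      rwa [← t₁.classParam_eq hrank hdeg, ← t₂.classParam_eq hrank hdeg]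
    exact Or.inr (t₁.hasRigidParallelPath hrank hdeg t₂ (ne_of_param_ne h₁₂) hve₁
      (t₁.notMem_of_classParam_ne hrank hdeg hve₁ he₂ hve₂ (Ne.symm h₁₂)) hve₂
      (t₂.notMem_of_classParam_ne hrank hdeg hve₂ he₁ hve₁ h₁₂) hwf₁
      (t₁.symm.notMem_of_classParam_ne hrank hdeg hwf₁ hf₂ hwf₂ hf₁₂.symm) hwf₂
      (t₂.symm.notMem_of_classParam_ne hrank hdeg hwf₂ hf₁ hwf₁ hf₁₂))

/-! ### The construction -/

variable (H)

noncomputable def classParams : Finset ℝ := H.E.image H.classParam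

noncomputable def tangentsAt (v : ι) : Finset ℝ := (H.incidentEdges v).image H.classParam

noncomputable def vertexIndex (v : ι) : ℕ := H.V.toList.idxOf v

-- Negative, hence no class parameter: a vertex placed at it meets no further tangent.
noncomputable def freshParam (v : ι) : ℝ := -((H.vertexIndex v : ℝ) + 1)

-- The parameter on the tangent at `t` of a vertex that is not a hinge: for
-- `tangentsAt v = {t, u}` it is `∑ - t = u`. Hinges are placed only afterwards, relative to these.
noncomputable def outerParam (t : ℝ) (v : ι) : ℝ :=
  if (H.tangentsAt v).card = 2 then (H.tangentsAt v).sum id - t else H.freshParam v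

-- For the twins `P = {e, f}` at a hinge: the parameters of their private vertices on their
-- common tangent, the one at `∑ (P.image classParam)`.
noncomputable def pairOuterParams (P : Finset (Finset ι)) : Finset ℝ :=
  ((P.sup id).filter (fun w => ¬ ∀ g ∈ P, w ∈ g)).image
    (H.outerParam ((P.image H.classParam).sum id))

noncomputable def hingeParam (P : Finset (Finset ι)) (n : ℕ) : ℝ :=
  ((betweenRange_infinite (H.pairOuterParams P)).sdiff H.classParams.finite_toSet).natEmbedding _ n

-- A vertex shared by twins.
def IsHinge (v : ι) : Prop := (H.incidentEdges v).card = 2 ∧ (H.tangentsAt v).card = 1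

open Classical in
noncomputable def freeParam (v : ι) : ℝ :=
  if H.IsHinge v then H.hingeParam (H.incidentEdges v) (H.vertexIndex v) else H.freshParam v

noncomputable def paramOn (t : ℝ) (v : ι) : ℝ :=
  if (H.tangentsAt v).card = 2 then (H.tangentsAt v).sum id - t else H.freeParam v

-- For `tangentsAt v = {s, u}` the first branch is `tangentMeet s u`.
noncomputable def position (v : ι) : Pt :=
  if (H.tangentsAt v).card = 2 then ((H.tangentsAt v).sum id / 2, (H.tangentsAt v).prod id)
  else if (H.tangentsAt v).card = 1 then tangentMeet ((H.tangentsAt v).sum id) (H.freeParam v)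
  else ((H.vertexIndex v : ℝ), (H.vertexIndex v : ℝ) ^ 2 + 1)

noncomputable def abscissae (e : Finset ι) : Finset ℝ := e.image fun v => (H.position v).1

noncomputable def leftEnd (e : Finset ι) : ℝ := sInf (H.abscissae e : Set ℝ)

-- An edge whose vertices share one abscissa (a single vertex) is stretched to the right.
noncomputable def rightEnd (e : Finset ι) : ℝ :=
  if H.leftEnd e < sSup (H.abscissae e : Set ℝ) then sSup (H.abscissae e : Set ℝ)
  else H.leftEnd e + 1

noncomputable def edgeSegment (e : Finset ι) : Set Pt :=
  segment ℝ (tangentPoint (H.classParam e) (H.leftEnd e))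
    (tangentPoint (H.classParam e) (H.rightEnd e))

variable {H}

theorem mem_tangentsAt {v : ι} {t : ℝ} :
    t ∈ H.tangentsAt v ↔ ∃ e ∈ H.E, v ∈ e ∧ H.classParam e = t := by
  simp [tangentsAt, and_assoc]

theorem classParam_mem_tangentsAt {v : ι} {e : Finset ι} (he : e ∈ H.E) (hve : v ∈ e) :
    H.classParam e ∈ H.tangentsAt v :=
  mem_tangentsAt.2 ⟨e, he, hve, rfl⟩

theorem tangentsAt_card_le (hdeg : ∀ v ∈ H.V, (H.incidentEdges v).card ≤ 2) {v : ι}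
    (hv : v ∈ H.V) : (H.tangentsAt v).card ≤ 2 :=
  Finset.card_image_le.trans (hdeg v hv)

theorem tangentsAt_subset_classParams (v : ι) : H.tangentsAt v ⊆ H.classParams :=
  Finset.image_subset_image (Finset.filter_subset _ _)

theorem classParams_nonneg {t : ℝ} (ht : t ∈ H.classParams) : 0 ≤ t := by
  obtain ⟨e, -, rfl⟩ := Finset.mem_image.1 ht
  exact classParam_nonneg e

theorem vertexIndex_injOn : Set.InjOn H.vertexIndex H.V := fun _ hv _ _ h =>
  (List.idxOf_inj (Finset.mem_toList.2 hv)).1 h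

theorem freshParam_neg (v : ι) : H.freshParam v < 0 := by
  have := (H.vertexIndex v).cast_nonneg (α := ℝ)
  unfold freshParam; linarith

theorem freshParam_injOn : Set.InjOn H.freshParam H.V := fun v hv w hw h =>
  vertexIndex_injOn hv hw (by
    have : (H.vertexIndex v : ℝ) = H.vertexIndex w := by unfold freshParam at h; linarith
    exact_mod_cast this)

theorem hingeParam_mem (P : Finset (Finset ι)) (n : ℕ) :
    H.hingeParam P n ∈ betweenRange (H.pairOuterParams P) ∧ H.hingeParam P n ∉ H.classParams :=
  Set.mem_sdiff _ |>.1 (Set.Infinite.natEmbedding _ _ n).prop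

theorem hingeParam_injective (P : Finset (Finset ι)) : Function.Injective (H.hingeParam P) :=
  fun _ _ h => Function.Embedding.injective _ (Subtype.val_injective h)

theorem freeParam_notMem_classParams (v : ι) : H.freeParam v ∉ H.classParams := by
  unfold freeParam
  split_ifs
  · exact (hingeParam_mem _ _).2
  · exact fun h => (freshParam_neg v).not_ge (classParams_nonneg h)

theorem paramOn_mem_tangentsAt {v : ι} {t : ℝ} (hv : (H.tangentsAt v).card = 2)
    (ht : t ∈ H.tangentsAt v) : H.paramOn t v ∈ H.tangentsAt v := by
  rw [paramOn, if_pos hv]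
  exact Finset.sum_sub_mem_of_card_eq_two hv ht

theorem position_eq_tangentMeet (hdeg : ∀ v ∈ H.V, (H.incidentEdges v).card ≤ 2) {v : ι}
    (hv : v ∈ H.V) {t : ℝ} (ht : t ∈ H.tangentsAt v) :
    H.position v = tangentMeet t (H.paramOn t v) := by
  unfold position paramOn
  split_ifs with h2 h1
  · obtain ⟨a, b, hab, hT⟩ := Finset.card_eq_two.1 h2
    rw [hT] at ht ⊢
    simp only [Finset.sum_pair hab, Finset.prod_pair hab, tangentMeet, id]
    rcases Finset.mem_insert.1 ht with rfl | ht
    · ext <;> ring_nf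
    · rw [Finset.mem_singleton.1 ht]; ext <;> ring_nf
  · obtain ⟨a, hT⟩ := Finset.card_eq_one.1 h1
    rw [hT] at ht ⊢
    rw [Finset.mem_singleton.1 ht, Finset.sum_singleton, id]
  · have := tangentsAt_card_le hdeg hv
    have := Finset.card_pos.2 ⟨t, ht⟩
    omega

theorem onTangent_position {v : ι} (hdeg : ∀ v ∈ H.V, (H.incidentEdges v).card ≤ 2)
    (hv : v ∈ H.V) {t : ℝ} (ht : t ∈ H.tangentsAt v) : OnTangent t (H.position v) :=
  position_eq_tangentMeet hdeg hv ht ▸ onTangent_tangentMeet _ _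

theorem not_onTangent_position {v : ι} (hv : H.tangentsAt v = ∅) (t : ℝ) :
    ¬ OnTangent t (H.position v) := fun h => by
  have h' := h.le_sq
  simp only [position, hv, Finset.card_empty] at h'
  norm_num at h'

theorem onTangent_position_iff (hdeg : ∀ v ∈ H.V, (H.incidentEdges v).card ≤ 2) {v : ι}
    (hv : v ∈ H.V) {t : ℝ} (ht : t ∈ H.classParams) :
    OnTangent t (H.position v) ↔ t ∈ H.tangentsAt v := by
  refine ⟨fun h => ?_, onTangent_position hdeg hv⟩
  obtain ⟨s, hs⟩ := (H.tangentsAt v).eq_empty_or_nonempty.resolve_left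
    (fun h0 => not_onTangent_position h0 t h)
  rw [position_eq_tangentMeet hdeg hv hs, onTangent_tangentMeet_iff] at h
  rcases h with rfl | rfl
  · exact hs
  · by_cases h2 : (H.tangentsAt v).card = 2
    · exact paramOn_mem_tangentsAt h2 hs
    · rw [paramOn, if_neg h2] at ht
      exact absurd ht (freeParam_notMem_classParams v)

theorem hasRigid_of_tangentsAt_eq (hrank : ∀ e ∈ H.E, e.card ≤ 3)
    (hdeg : ∀ v ∈ H.V, (H.incidentEdges v).card ≤ 2) {v w : ι} (hvw : v ≠ w)
    (hcard : (H.tangentsAt v).card = 2) (h : H.tangentsAt v = H.tangentsAt w) :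
    H.HasRigidTriangle ∨ H.HasRigidParallelPath := by
  obtain ⟨s, u, hsu, hT⟩ := Finset.card_eq_two.1 hcard
  have hs : s ∈ H.tangentsAt v := by simp [hT]
  have hu : u ∈ H.tangentsAt v := by simp [hT]
  obtain ⟨e₁, he₁, hve₁, rfl⟩ := mem_tangentsAt.1 hs
  obtain ⟨e₂, he₂, hve₂, rfl⟩ := mem_tangentsAt.1 hu
  obtain ⟨f₁, hf₁, hwf₁, h₁⟩ := mem_tangentsAt.1 (h ▸ hs)
  obtain ⟨f₂, hf₂, hwf₂, h₂⟩ := mem_tangentsAt.1 (h ▸ hu)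
  exact hasRigid_of_classParam_eq hrank hdeg hvw he₁ he₂ hf₁ hf₂ hve₁ hve₂ hwf₁ hwf₂ h₁.symm
    h₂.symm hsu

theorem IsHinge.exists_twins (hrank : ∀ e ∈ H.E, e.card ≤ 3)
    (hdeg : ∀ v ∈ H.V, (H.incidentEdges v).card ≤ 2) {v : ι} (h : H.IsHinge v) :
    ∃ e f, H.Twins e f ∧ H.incidentEdges v = {e, f} := by
  obtain ⟨e, f, hef, hD⟩ := Finset.card_eq_two.1 h.1
  have he : e ∈ H.incidentEdges v := by simp [hD]
  have hf : f ∈ H.incidentEdges v := by simp [hD]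
  have htp : H.classParam e = H.classParam f := Finset.card_le_one.1 h.2.le _
    (Finset.mem_image_of_mem _ he) _ (Finset.mem_image_of_mem _ hf)
  rw [mem_incidentEdges] at he hf
  exact ⟨e, f, ((classParam_eq_iff hrank hdeg he.1 hf.1).1 htp).resolve_left hef, hD⟩

theorem Twins.isHinge_of_mem (hrank : ∀ e ∈ H.E, e.card ≤ 3)
    (hdeg : ∀ v ∈ H.V, (H.incidentEdges v).card ≤ 2) {e f : Finset ι} (h : H.Twins e f) {v : ι}
    (hve : v ∈ e) (hvf : v ∈ f) : H.IsHinge v ∧ H.incidentEdges v = {e, f} := by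
  have hD := incidentEdges_eq_pair hdeg h.1 h.2.1 h.2.2.1 hve hvf
  refine ⟨⟨by rw [hD, Finset.card_pair h.2.2.1], ?_⟩, hD⟩
  simp [tangentsAt, hD, Finset.image_insert, h.classParam_eq hrank hdeg]

theorem Twins.not_isHinge (hrank : ∀ e ∈ H.E, e.card ≤ 3)
    (hdeg : ∀ v ∈ H.V, (H.incidentEdges v).card ≤ 2) {e f : Finset ι} (h : H.Twins e f) {v : ι}
    (hvf : v ∈ f) (hve : v ∉ e) : ¬ H.IsHinge v := fun hv => by
  obtain ⟨g, k, hgk, hD⟩ := hv.exists_twins hrank hdeg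
  have hfD : f ∈ H.incidentEdges v := mem_incidentEdges.2 ⟨h.2.1, hvf⟩
  rw [hD, Finset.mem_insert, Finset.mem_singleton] at hfD
  rcases hfD with rfl | rfl
  · obtain rfl := h.symm.unique hrank hdeg hgk
    exact hve (mem_incidentEdges.1 (hD ▸ Finset.mem_insert_of_mem (Finset.mem_singleton_self _))).2
  · obtain rfl := h.symm.unique hrank hdeg hgk.symm
    exact hve (mem_incidentEdges.1 (hD ▸ Finset.mem_insert_self _ _)).2

theorem Twins.mem_or_mem_of_mem_tangentsAt (hrank : ∀ e ∈ H.E, e.card ≤ 3)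
    (hdeg : ∀ v ∈ H.V, (H.incidentEdges v).card ≤ 2) {e f : Finset ι} (h : H.Twins e f) {w : ι}
    (hw : H.classParam e ∈ H.tangentsAt w) : w ∈ e ∨ w ∈ f := by
  obtain ⟨g, hg, hwg, htp⟩ := mem_tangentsAt.1 hw
  rcases (classParam_eq_iff hrank hdeg h.1 hg).1 htp.symm with rfl | hg'
  · exact Or.inl hwg
  · exact Or.inr (h.unique hrank hdeg hg' ▸ hwg)

theorem paramOn_of_card_ne_two {v : ι} (h : (H.tangentsAt v).card ≠ 2) (t : ℝ) :
    H.paramOn t v = H.freeParam v := by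
  rw [paramOn, if_neg h]

theorem paramOn_eq_outerParam {v : ι} (h : ¬ H.IsHinge v) (t : ℝ) :
    H.paramOn t v = H.outerParam t v := by
  unfold paramOn outerParam freeParam
  split_ifs <;> rfl

theorem Twins.paramOn_of_mem (hrank : ∀ e ∈ H.E, e.card ≤ 3)
    (hdeg : ∀ v ∈ H.V, (H.incidentEdges v).card ≤ 2) {e f : Finset ι} (h : H.Twins e f) {v : ι}
    (hve : v ∈ e) (hvf : v ∈ f) (t : ℝ) :
    H.paramOn t v = H.hingeParam {e, f} (H.vertexIndex v) := by
  obtain ⟨hv, hD⟩ := h.isHinge_of_mem hrank hdeg hve hvf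
  rw [paramOn_of_card_ne_two (by rw [hv.2]; decide), freeParam, if_pos hv, hD]

theorem Twins.outerParam_mem_pairOuterParams (hrank : ∀ e ∈ H.E, e.card ≤ 3)
    (hdeg : ∀ v ∈ H.V, (H.incidentEdges v).card ≤ 2) {e f : Finset ι} (h : H.Twins e f) {w : ι}
    (hw : w ∈ e ∨ w ∈ f) (hw' : ¬ (w ∈ e ∧ w ∈ f)) :
    H.outerParam (H.classParam e) w ∈ H.pairOuterParams {e, f} := by
  have hsum : (({e, f} : Finset (Finset ι)).image H.classParam).sum id = H.classParam e := by
    simp [Finset.image_insert, h.classParam_eq hrank hdeg]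
  rw [pairOuterParams, hsum]
  apply Finset.mem_image_of_mem
  simpa [Finset.sup_insert] using ⟨hw, not_and.1 hw'⟩

theorem Twins.card_pairOuterParams_le (hrank : ∀ e ∈ H.E, e.card ≤ 3) {e f : Finset ι}
    (h : H.Twins e f) : (H.pairOuterParams {e, f}).card ≤ 2 := by
  refine Finset.card_image_le.trans ?_
  have hsub : Finset.filter (fun w => ¬ ∀ g ∈ ({e, f} : Finset (Finset ι)), w ∈ g)
      (({e, f} : Finset (Finset ι)).sup id) ⊆ (e ∪ f) \ (e ∩ f) := by
    intro w; simp [Finset.sup_insert]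
  refine (Finset.card_le_card hsub).trans ?_
  rw [Finset.card_sdiff_of_subset (Finset.inter_subset_left.trans Finset.subset_union_left)]
  have := Finset.card_union_add_card_inter e f
  have := h.card_inter hrank
  have := hrank e h.1
  have := hrank f h.2.1
  omega

theorem Twins.outerParam_ne (hrank : ∀ e ∈ H.E, e.card ≤ 3)
    (hdeg : ∀ v ∈ H.V, (H.incidentEdges v).card ≤ 2) (htri : ¬ H.HasRigidTriangle)
    (hpath : ¬ H.HasRigidParallelPath) {e f : Finset ι} (h : H.Twins e f) {a d : ι}
    (hae : a ∈ e) (haf : a ∉ f) (hdf : d ∈ f) (hde : d ∉ e) :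
    H.outerParam (H.classParam e) a ≠ H.outerParam (H.classParam e) d := by
  intro heq
  have had : a ≠ d := by rintro rfl; exact haf hdf
  have hta := classParam_mem_tangentsAt h.1 hae
  have htd := h.classParam_eq hrank hdeg ▸ classParam_mem_tangentsAt h.2.1 hdf
  unfold outerParam at heq
  split_ifs at heq with ha hd hd
  · have hT : H.tangentsAt a = H.tangentsAt d := by
      rw [Finset.eq_pair_sum_sub ha hta, Finset.eq_pair_sum_sub hd htd, heq]
    exact (hasRigid_of_tangentsAt_eq hrank hdeg had ha hT).elim htri hpath
  · have := classParams_nonneg (tangentsAt_subset_classParams a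
      (Finset.sum_sub_mem_of_card_eq_two ha hta))
    linarith [freshParam_neg (H := H) d]
  · have := classParams_nonneg (tangentsAt_subset_classParams d
      (Finset.sum_sub_mem_of_card_eq_two hd htd))
    linarith [freshParam_neg (H := H) a]
  · exact had (freshParam_injOn (H.edge_subset e h.1 hae) (H.edge_subset f h.2.1 hdf) heq)

theorem tangentsAt_eq_of_position_eq (hdeg : ∀ v ∈ H.V, (H.incidentEdges v).card ≤ 2) {v w : ι}
    (hv : v ∈ H.V) (hw : w ∈ H.V) (h : H.position v = H.position w) :
    H.tangentsAt v = H.tangentsAt w := by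
  have key {x y : ι} (hx : x ∈ H.V) (hy : y ∈ H.V) (hxy : H.position x = H.position y) :
      H.tangentsAt x ⊆ H.tangentsAt y := fun t ht =>
    (onTangent_position_iff hdeg hy (tangentsAt_subset_classParams x ht)).1
      (hxy ▸ onTangent_position hdeg hx ht)
  exact Finset.Subset.antisymm (key hv hw h) (key hw hv h.symm)

theorem IsHinge.classParam_eq {v : ι} (hv : H.IsHinge v) {e : Finset ι} {t : ℝ}
    (he : e ∈ H.incidentEdges v) (ht : t ∈ H.tangentsAt v) : H.classParam e = t :=
  Finset.card_le_one.1 hv.2.le _ (Finset.mem_image_of_mem _ he) _ ht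

theorem IsHinge.freeParam_ne (hrank : ∀ e ∈ H.E, e.card ≤ 3)
    (hdeg : ∀ v ∈ H.V, (H.incidentEdges v).card ≤ 2) {v w : ι} (hv : H.IsHinge v)
    (hw : ¬ H.IsHinge w) {t : ℝ} (hvt : t ∈ H.tangentsAt v) (hwt : H.tangentsAt w = {t}) :
    H.freeParam v ≠ H.freeParam w := by
  obtain ⟨e, f, h, hD⟩ := hv.exists_twins hrank hdeg
  have hte : H.classParam e = t := hv.classParam_eq (by simp [hD]) hvt
  have hwef := h.mem_or_mem_of_mem_tangentsAt hrank hdeg (w := w) (by simp [hte, hwt])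
  have hp := h.outerParam_mem_pairOuterParams hrank hdeg hwef
    (fun hw' => hw (h.isHinge_of_mem hrank hdeg hw'.1 hw'.2).1)
  rw [← paramOn_eq_outerParam hw, paramOn_of_card_ne_two (by simp [hwt])] at hp
  rw [freeParam, if_pos hv, hD]
  exact fun heq => notMem_betweenRange_of_card_le_two (h.card_pairOuterParams_le hrank) hp
    (heq ▸ (hingeParam_mem _ _).1)

theorem freeParam_injOn_of_tangentsAt_eq (hrank : ∀ e ∈ H.E, e.card ≤ 3)
    (hdeg : ∀ v ∈ H.V, (H.incidentEdges v).card ≤ 2) {v w : ι} (hv : v ∈ H.V) (hw : w ∈ H.V)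
    {t : ℝ} (hvt : H.tangentsAt v = {t}) (hwt : H.tangentsAt w = {t})
    (h : H.freeParam v = H.freeParam w) : v = w := by
  by_cases hvh : H.IsHinge v <;> by_cases hwh : H.IsHinge w
  · obtain ⟨e, f, hef, hD⟩ := hvh.exists_twins hrank hdeg
    have hte : H.classParam e = t := hvh.classParam_eq (by simp [hD]) (by simp [hvt])
    have hwe : w ∈ e ∧ w ∈ f := by
      rcases hef.mem_or_mem_of_mem_tangentsAt hrank hdeg (w := w) (by simp [hte, hwt])
        with hwe | hwf
      · exact ⟨hwe, by_contra fun hwf => hef.symm.not_isHinge hrank hdeg hwe hwf hwh⟩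
      · exact ⟨by_contra fun hwe => hef.not_isHinge hrank hdeg hwf hwe hwh, hwf⟩
    rw [freeParam, if_pos hvh, hD, freeParam, if_pos hwh,
      (hef.isHinge_of_mem hrank hdeg hwe.1 hwe.2).2] at h
    exact vertexIndex_injOn hv hw (hingeParam_injective _ h)
  · exact absurd h (hvh.freeParam_ne hrank hdeg hwh (by simp [hvt]) hwt)
  · exact absurd h.symm (hwh.freeParam_ne hrank hdeg hvh (by simp [hwt]) hvt)
  · rw [freeParam, if_neg hvh, freeParam, if_neg hwh] at h
    exact freshParam_injOn hv hw h

theorem position_injOn (hrank : ∀ e ∈ H.E, e.card ≤ 3)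
    (hdeg : ∀ v ∈ H.V, (H.incidentEdges v).card ≤ 2) (htri : ¬ H.HasRigidTriangle)
    (hpath : ¬ H.HasRigidParallelPath) : Set.InjOn H.position H.V := by
  intro v hv w hw h
  by_contra hvw
  have hT := tangentsAt_eq_of_position_eq hdeg hv hw h
  rcases (H.tangentsAt v).eq_empty_or_nonempty with h0 | ⟨t, ht⟩
  · simp [position, h0, ← hT] at h
    exact hvw (vertexIndex_injOn hv hw h)
  · by_cases h2 : (H.tangentsAt v).card = 2
    · exact (hasRigid_of_tangentsAt_eq hrank hdeg hvw h2 hT).elim htri hpath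
    · have hpar := congrArg Prod.fst h
      rw [position_eq_tangentMeet hdeg hv ht, position_eq_tangentMeet hdeg hw (hT ▸ ht),
        paramOn_of_card_ne_two h2, paramOn_of_card_ne_two (hT ▸ h2)] at hpar
      have h1 : (H.tangentsAt v).card ≤ 1 := by
        have := tangentsAt_card_le hdeg hv
        omega
      have hvt : H.tangentsAt v = {t} :=
        Finset.eq_singleton_iff_unique_mem.2 ⟨ht, fun x hx => Finset.card_le_one.1 h1 x hx t ht⟩
      exact hvw (freeParam_injOn_of_tangentsAt_eq hrank hdeg hv hw hvt (hT ▸ hvt)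
        (by simp only [tangentMeet] at hpar; linarith))

theorem leftEnd_le {e : Finset ι} {x : ℝ} (hx : x ∈ H.abscissae e) : H.leftEnd e ≤ x :=
  csInf_le (H.abscissae e).bddBelow hx

theorem le_rightEnd {e : Finset ι} {x : ℝ} (hx : x ∈ H.abscissae e) : x ≤ H.rightEnd e := by
  have := le_csSup (H.abscissae e).bddAbove hx
  unfold rightEnd
  split_ifs with h
  · exact this
  · linarith [not_lt.1 h]

theorem leftEnd_lt_rightEnd (e : Finset ι) : H.leftEnd e < H.rightEnd e := by
  unfold rightEnd
  split_ifs with h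
  · exact h
  · exact lt_add_one _

theorem lt_leftEnd {e : Finset ι} (he : e.Nonempty) {y : ℝ}
    (h : ∀ x ∈ H.abscissae e, y < x) : y < H.leftEnd e :=
  h _ (he.image _).csInf_mem

theorem rightEnd_lt {e : Finset ι} {x₁ x₂ : ℝ} (hx₁ : x₁ ∈ H.abscissae e)
    (hx₂ : x₂ ∈ H.abscissae e) (hx : x₁ ≠ x₂) {y : ℝ} (h : ∀ x ∈ H.abscissae e, x < y) :
    H.rightEnd e < y := by
  have hlt : H.leftEnd e < sSup (H.abscissae e : Set ℝ) := by
    rcases lt_or_gt_of_ne hx with h₁₂ | h₂₁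
    · exact (leftEnd_le hx₁).trans_lt (h₁₂.trans_le (le_csSup (H.abscissae e).bddAbove hx₂))
    · exact (leftEnd_le hx₂).trans_lt (h₂₁.trans_le (le_csSup (H.abscissae e).bddAbove hx₁))
  rw [rightEnd, if_pos hlt]
  exact h _ (Finset.Nonempty.csSup_mem ⟨x₁, hx₁⟩)

theorem mem_edgeSegment_iff {e : Finset ι} {p : Pt} :
    p ∈ H.edgeSegment e ↔ OnTangent (H.classParam e) p ∧ H.leftEnd e ≤ p.1 ∧ p.1 ≤ H.rightEnd e :=
  mem_segment_tangentPoint_iff (leftEnd_lt_rightEnd e).le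

theorem abscissa_position (hdeg : ∀ v ∈ H.V, (H.incidentEdges v).card ≤ 2) {v : ι}
    (hv : v ∈ H.V) {t : ℝ} (ht : t ∈ H.tangentsAt v) :
    (H.position v).1 = (t + H.paramOn t v) / 2 := by
  rw [position_eq_tangentMeet hdeg hv ht]; rfl

theorem position_mem_edgeSegment (hdeg : ∀ v ∈ H.V, (H.incidentEdges v).card ≤ 2) {v : ι}
    {e : Finset ι} (he : e ∈ H.E) (hve : v ∈ e) : H.position v ∈ H.edgeSegment e := by
  have hx : (H.position v).1 ∈ H.abscissae e := Finset.mem_image_of_mem _ hve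
  exact mem_edgeSegment_iff.2 ⟨onTangent_position hdeg (H.edge_subset e he hve)
    (classParam_mem_tangentsAt he hve), leftEnd_le hx, le_rightEnd hx⟩

theorem Twins.paramOn_mem (hrank : ∀ e ∈ H.E, e.card ≤ 3)
    (hdeg : ∀ v ∈ H.V, (H.incidentEdges v).card ≤ 2) (htri : ¬ H.HasRigidTriangle)
    (hpath : ¬ H.HasRigidParallelPath) {e f : Finset ι} (h : H.Twins e f) {v w : ι}
    (hvf : v ∈ f) (hve : v ∉ e) (hwe : w ∈ e) :
    H.paramOn (H.classParam e) w ∈ betweenRange (H.pairOuterParams {e, f}) ∪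
      ↑((H.pairOuterParams {e, f}).erase (H.outerParam (H.classParam e) v)) := by
  by_cases hwf : w ∈ f
  · rw [h.paramOn_of_mem hrank hdeg hwe hwf]
    exact Or.inl (hingeParam_mem _ _).1
  · have hp := h.outerParam_mem_pairOuterParams hrank hdeg (Or.inl hwe) (fun h' => hwf h'.2)
    rw [paramOn_eq_outerParam (h.symm.not_isHinge hrank hdeg hwe hwf)]
    exact Or.inr (Finset.mem_erase.2 ⟨h.outerParam_ne hrank hdeg htri hpath hwe hwf hvf hve, hp⟩)

theorem Twins.exists_abscissae_ne (hrank : ∀ e ∈ H.E, e.card ≤ 3)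
    (hdeg : ∀ v ∈ H.V, (H.incidentEdges v).card ≤ 2) {e f : Finset ι} (h : H.Twins e f) :
    ∃ x₁ ∈ H.abscissae e, ∃ x₂ ∈ H.abscissae e, x₁ ≠ x₂ := by
  obtain ⟨b, c, hbc, hS⟩ := Finset.card_eq_two.1 (h.card_inter hrank)
  have hb : b ∈ e ∩ f := by simp [hS]
  have hc : c ∈ e ∩ f := by simp [hS]
  rw [Finset.mem_inter] at hb hc
  have hbV := H.edge_subset e h.1 hb.1
  have hcV := H.edge_subset e h.1 hc.1
  refine ⟨_, Finset.mem_image_of_mem _ hb.1, _, Finset.mem_image_of_mem _ hc.1, fun hbc' => ?_⟩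
  rw [abscissa_position hdeg hbV (classParam_mem_tangentsAt h.1 hb.1),
    abscissa_position hdeg hcV (classParam_mem_tangentsAt h.1 hc.1),
    h.paramOn_of_mem hrank hdeg hb.1 hb.2, h.paramOn_of_mem hrank hdeg hc.1 hc.2] at hbc'
  exact hbc (vertexIndex_injOn hbV hcV (hingeParam_injective _ (by linarith)))

theorem Twins.lt_leftEnd_or_rightEnd_lt (hrank : ∀ e ∈ H.E, e.card ≤ 3)
    (hdeg : ∀ v ∈ H.V, (H.incidentEdges v).card ≤ 2) (htri : ¬ H.HasRigidTriangle)
    (hpath : ¬ H.HasRigidParallelPath) {e f : Finset ι} (h : H.Twins e f) {v : ι} (hvf : v ∈ f)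
    (hve : v ∉ e) : (H.position v).1 < H.leftEnd e ∨ H.rightEnd e < (H.position v).1 := by
  have hvt : H.classParam e ∈ H.tangentsAt v := by
    rw [h.classParam_eq hrank hdeg]; exact classParam_mem_tangentsAt h.2.1 hvf
  have hpv := h.outerParam_mem_pairOuterParams hrank hdeg (Or.inr hvf) (fun h' => hve h'.1)
  have habs {w : ι} (hw : w ∈ e) := abscissa_position hdeg (H.edge_subset e h.1 hw)
    (classParam_mem_tangentsAt h.1 hw)
  rw [abscissa_position hdeg (H.edge_subset f h.2.1 hvf) hvt,
    paramOn_eq_outerParam (h.not_isHinge hrank hdeg hvf hve)]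
  rcases forall_lt_or_forall_gt_of_card_le_two (h.card_pairOuterParams_le hrank) hpv with hlt | hgt
  · refine Or.inl (lt_leftEnd (H.edge_nonempty e h.1) fun x hx => ?_)
    obtain ⟨w, hw, rfl⟩ := Finset.mem_image.1 hx
    rw [habs hw]
    linarith [hlt _ (h.paramOn_mem hrank hdeg htri hpath hvf hve hw)]
  · obtain ⟨x₁, hx₁, x₂, hx₂, hx⟩ := h.exists_abscissae_ne hrank hdeg
    refine Or.inr (rightEnd_lt hx₁ hx₂ hx fun x hx => ?_)
    obtain ⟨w, hw, rfl⟩ := Finset.mem_image.1 hx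
    rw [habs hw]
    linarith [hgt _ (h.paramOn_mem hrank hdeg htri hpath hvf hve hw)]

theorem position_mem_edgeSegment_iff (hrank : ∀ e ∈ H.E, e.card ≤ 3)
    (hdeg : ∀ v ∈ H.V, (H.incidentEdges v).card ≤ 2) (htri : ¬ H.HasRigidTriangle)
    (hpath : ¬ H.HasRigidParallelPath) {v : ι} (hv : v ∈ H.V) {e : Finset ι} (he : e ∈ H.E) :
    H.position v ∈ H.edgeSegment e ↔ v ∈ e := by
  refine ⟨fun hmem => ?_, position_mem_edgeSegment hdeg he⟩
  by_contra hve
  obtain ⟨hon, hl, hr⟩ := mem_edgeSegment_iff.1 hmem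
  obtain ⟨f, hf, hvf, htp⟩ := mem_tangentsAt.1
    ((onTangent_position_iff hdeg hv (Finset.mem_image_of_mem _ he)).1 hon)
  have h : H.Twins e f := ((classParam_eq_iff hrank hdeg he hf).1 htp.symm).resolve_left
    (by rintro rfl; exact hve hvf)
  rcases h.lt_leftEnd_or_rightEnd_lt hrank hdeg htri hpath hvf hve with h' | h' <;> linarith

theorem nonempty_segmentRep (hrank : ∀ e ∈ H.E, e.card ≤ 3)
    (hdeg : ∀ v ∈ H.V, (H.incidentEdges v).card ≤ 2) (htri : ¬ H.HasRigidTriangle)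
    (hpath : ¬ H.HasRigidParallelPath) : Nonempty (SegmentRep H) :=
  have incidence v (hv : v ∈ H.V) e (he : e ∈ H.E) :=
    (position_mem_edgeSegment_iff hrank hdeg htri hpath hv he).symm
  ⟨{  α := H.position
      β := H.edgeSegment
      α_inj := position_injOn hrank hdeg htri hpath
      β_inj := injOn_of_incidence incidence
      β_isSegment := fun e _ => ⟨_, _, fun h => (leftEnd_lt_rightEnd e).ne
        (congrArg Prod.fst h), rfl⟩
      incidence := incidence }⟩

end SimpleHypergraph

theorem stmt10 {ι : Type} [DecidableEq ι] (H : SimpleHypergraph ι)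
    (hrank : ∀ e ∈ H.E, e.card ≤ 3)
    (hdeg : ∀ v ∈ H.V, (H.E.filter (fun e => v ∈ e)).card ≤ 2) :
    Nonempty (SegmentRep H) ↔
      ((¬ ∃ a b c d : ι, [a, b, c, d].Pairwise (· ≠ ·) ∧
          ({a, b, c} : Finset ι) ∈ H.E ∧ ({b, c, d} : Finset ι) ∈ H.E ∧
          (({a, d} : Finset ι) ∈ H.E ∨
            ∃ f : ι, f ∉ ({a, b, c, d} : Finset ι) ∧ ({a, d, f} : Finset ι) ∈ H.E)) ∧
       (¬ ∃ a b₁ b₂ c₁ c₂ d : ι, [a, b₁, b₂, c₁, c₂, d].Pairwise (· ≠ ·) ∧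
          ({a, b₁, c₁} : Finset ι) ∈ H.E ∧ ({b₁, c₁, d} : Finset ι) ∈ H.E ∧
          ({a, b₂, c₂} : Finset ι) ∈ H.E ∧ ({b₂, c₂, d} : Finset ι) ∈ H.E)) :=
  ⟨fun ⟨R⟩ => ⟨R.not_hasRigidTriangle, R.not_hasRigidParallelPath⟩,
    fun ⟨htri, hpath⟩ => H.nonempty_segmentRep hrank hdeg htri hpath⟩
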